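/- Let U ⊆ ℂ be open, m ≥ 1, λ ∈ ℝ, and let F : U → ℂ^{2m} be a smooth map with F(z) ≠ 0 for all z ∈ U, satisfying the eigenspinor equation ∂_z̄ F = (λ/2)·|F|²·I(F) on U. Then for all z ∈ U: (a) ⟨∂_z̄ F, F⟩ = 0; and (b) ∂_z ∂_z̄ F − (⟨∂_z ∂_z̄ F, F⟩ / |F|²)·F = (⟨∂_z F, F⟩ / |F|²)·∂_z̄ F. (Conclusion (b) is the harmonic map equation into ℂP^{2m−1} for the projectivization [F]; this is the local-coordinate content of Theorem 2.4: a family of Dirac eigenspinors ψ₁, …, ψ_m with Σ|ψⱼ|² = 1 defines a harmonic map [ψ₁₊ : ψ̄₁₋ : … : ψ_{m+} : ψ̄_{m−}] : M → ℂP^{2m−1}.) -/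

import Mathlib

open Complex

/-- Wirtinger derivative `∂_z F = ½(∂ₓF - i ∂_yF)` of a map `F : ℂ → E`. -/
noncomputable def wirtZ {E : Type*} [NormedAddCommGroup E] [NormedSpace ℂ E]
    (F : ℂ → E) (z : ℂ) : E :=
  (1 / 2 : ℂ) • (fderiv ℝ F z 1 - Complex.I • fderiv ℝ F z Complex.I)

/-- Wirtinger derivative `∂_z̄ F = ½(∂ₓF + i ∂_yF)` of a map `F : ℂ → E`. -/
noncomputable def wirtZbar {E : Type*} [NormedAddCommGroup E] [NormedSpace ℂ E]
    (F : ℂ → E) (z : ℂ) : E :=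
  (1 / 2 : ℂ) • (fderiv ℝ F z 1 + Complex.I • fderiv ℝ F z Complex.I)

/-- The Hermitian inner product `⟨u, v⟩ = Σⱼ uⱼ v̄ⱼ` on `ℂ^{2m} = (ℂ × ℂ)^m`
(linear in the first argument). -/
noncomputable def herm {m : ℕ} (u v : Fin m → ℂ × ℂ) : ℂ :=
  ∑ j, ((u j).1 * (starRingEnd ℂ) ((v j).1) + (u j).2 * (starRingEnd ℂ) ((v j).2))

/-- The quaternionic structure `I(z₁, z₂, …, z_{2m-1}, z_{2m})
= (-z̄₂, z̄₁, …, -z̄_{2m}, z̄_{2m-1})` on `ℂ^{2m} = (ℂ × ℂ)^m`. -/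
def quatI {m : ℕ} (v : Fin m → ℂ × ℂ) : Fin m → ℂ × ℂ :=
  fun j => (-(starRingEnd ℂ) ((v j).2), (starRingEnd ℂ) ((v j).1))

section Aux
variable {m : ℕ}

lemma herm_add_left (u u' v : Fin m → ℂ × ℂ) : herm (u + u') v = herm u v + herm u' v := by
  simp only [herm, Pi.add_apply, Prod.fst_add, Prod.snd_add, ← Finset.sum_add_distrib]
  exact Finset.sum_congr rfl fun j _ => by ring

lemma herm_sub_left (u u' v : Fin m → ℂ × ℂ) : herm (u - u') v = herm u v - herm u' v := by
  simp only [herm, Pi.sub_apply, Prod.fst_sub, Prod.snd_sub, ← Finset.sum_sub_distrib]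
  exact Finset.sum_congr rfl fun j _ => by ring

lemma herm_smul_left (c : ℂ) (u v : Fin m → ℂ × ℂ) : herm (c • u) v = c * herm u v := by
  simp only [herm, Pi.smul_apply, Prod.smul_fst, Prod.smul_snd, smul_eq_mul, Finset.mul_sum]
  exact Finset.sum_congr rfl fun j _ => by ring

lemma herm_add_right (u v v' : Fin m → ℂ × ℂ) : herm u (v + v') = herm u v + herm u v' := by
  simp only [herm, Pi.add_apply, Prod.fst_add, Prod.snd_add, map_add, ← Finset.sum_add_distrib]
  exact Finset.sum_congr rfl fun j _ => by ring

lemma herm_smul_right (c : ℂ) (u v : Fin m → ℂ × ℂ) :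
    herm u (c • v) = (starRingEnd ℂ) c * herm u v := by
  simp only [herm, Pi.smul_apply, Prod.smul_fst, Prod.smul_snd, smul_eq_mul, map_mul,
    Finset.mul_sum]
  exact Finset.sum_congr rfl fun j _ => by ring

lemma quatI_smul (c : ℂ) (v : Fin m → ℂ × ℂ) :
    quatI (c • v) = (starRingEnd ℂ) c • quatI v := by
  funext j
  simp only [quatI, Pi.smul_apply, Prod.smul_fst, Prod.smul_snd, smul_eq_mul, map_mul,
    Prod.smul_mk, Prod.mk.injEq]
  exact ⟨by ring, trivial⟩

lemma quatI_add (u v : Fin m → ℂ × ℂ) : quatI (u + v) = quatI u + quatI v := by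
  funext j
  simp only [quatI, Pi.add_apply, Prod.fst_add, Prod.snd_add, map_add, Prod.mk.injEq,
    Prod.mk_add_mk]
  exact ⟨by ring, trivial⟩

lemma quatI_quatI (v : Fin m → ℂ × ℂ) : quatI (quatI v) = -v := by
  funext j
  simp [quatI, Prod.ext_iff]

lemma herm_quatI_left (v : Fin m → ℂ × ℂ) : herm (quatI v) v = 0 := by
  simp only [herm, quatI]
  exact Finset.sum_eq_zero fun j _ => by ring

lemma herm_quatI_right (v : Fin m → ℂ × ℂ) : herm v (quatI v) = 0 := by
  simp only [herm, quatI, map_neg, Complex.conj_conj]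
  exact Finset.sum_eq_zero fun j _ => by ring

lemma herm_self_eq (v : Fin m → ℂ × ℂ) :
    herm v v = ((∑ j, (Complex.normSq ((v j).1) + Complex.normSq ((v j).2)) : ℝ) : ℂ) := by
  push_cast
  simp [herm, Complex.mul_conj]

lemma conj_herm_self (v : Fin m → ℂ × ℂ) : (starRingEnd ℂ) (herm v v) = herm v v := by
  rw [herm_self_eq, Complex.conj_ofReal]

lemma herm_self_ne_zero {v : Fin m → ℂ × ℂ} (hv : v ≠ 0) : herm v v ≠ 0 := by
  rw [herm_self_eq]
  rw [Ne, Complex.ofReal_eq_zero]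
  intro h
  apply hv
  have hnn : ∀ j ∈ Finset.univ (α := Fin m),
      0 ≤ Complex.normSq ((v j).1) + Complex.normSq ((v j).2) := fun j _ =>
    add_nonneg (Complex.normSq_nonneg _) (Complex.normSq_nonneg _)
  have := (Finset.sum_eq_zero_iff_of_nonneg hnn).mp h
  funext j
  have hj := this j (Finset.mem_univ j)
  have h1 : Complex.normSq ((v j).1) = 0 ∧ Complex.normSq ((v j).2) = 0 := by
    constructor <;> nlinarith [Complex.normSq_nonneg ((v j).1), Complex.normSq_nonneg ((v j).2)]
  have := Complex.normSq_eq_zero.mp h1.1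
  have := Complex.normSq_eq_zero.mp h1.2
  ext <;> simp_all

noncomputable def conjCLM : ℂ →L[ℝ] ℂ := Complex.conjCLE.toContinuousLinearMap

@[simp] lemma conjCLM_apply (z : ℂ) : conjCLM z = (starRingEnd ℂ) z := rfl

noncomputable def quatICLM (m : ℕ) : (Fin m → ℂ × ℂ) →L[ℝ] (Fin m → ℂ × ℂ) :=
  ContinuousLinearMap.pi fun j =>
    (((-(conjCLM.comp (ContinuousLinearMap.snd ℝ ℂ ℂ))).prod
      (conjCLM.comp (ContinuousLinearMap.fst ℝ ℂ ℂ))).comp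
      (ContinuousLinearMap.proj j))

lemma quatICLM_apply {m : ℕ} (v : Fin m → ℂ × ℂ) : quatICLM m v = quatI v := rfl

lemma herm_hasFDerivAt {m : ℕ} {f g : ℂ → Fin m → ℂ × ℂ}
    {Df Dg : ℂ →L[ℝ] (Fin m → ℂ × ℂ)} {z : ℂ}
    (hf : HasFDerivAt f Df z) (hg : HasFDerivAt g Dg z) :
    ∃ D : ℂ →L[ℝ] ℂ, HasFDerivAt (fun w => herm (f w) (g w)) D z ∧
      ∀ v : ℂ, D v = herm (Df v) (g z) + herm (f z) (Dg v) := by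
  have hp : ∀ j : Fin m, HasFDerivAt (fun w => f w j) ((ContinuousLinearMap.proj j).comp Df) z :=
    fun j => ((ContinuousLinearMap.proj (R := ℝ) (φ := fun _ : Fin m => ℂ × ℂ) j).hasFDerivAt.comp z hf : )
  have hq : ∀ j : Fin m, HasFDerivAt (fun w => g w j) ((ContinuousLinearMap.proj j).comp Dg) z :=
    fun j => ((ContinuousLinearMap.proj (R := ℝ) (φ := fun _ : Fin m => ℂ × ℂ) j).hasFDerivAt.comp z hg : )
  have hf1 : ∀ j : Fin m, HasFDerivAt (fun w => (f w j).1)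
      ((ContinuousLinearMap.fst ℝ ℂ ℂ).comp ((ContinuousLinearMap.proj j).comp Df)) z :=
    fun j => (ContinuousLinearMap.fst ℝ ℂ ℂ).hasFDerivAt.comp z (hp j)
  have hf2 : ∀ j : Fin m, HasFDerivAt (fun w => (f w j).2)
      ((ContinuousLinearMap.snd ℝ ℂ ℂ).comp ((ContinuousLinearMap.proj j).comp Df)) z :=
    fun j => (ContinuousLinearMap.snd ℝ ℂ ℂ).hasFDerivAt.comp z (hp j)
  have hg1 : ∀ j : Fin m, HasFDerivAt (fun w => (starRingEnd ℂ) ((g w j).1))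
      (conjCLM.comp ((ContinuousLinearMap.fst ℝ ℂ ℂ).comp
        ((ContinuousLinearMap.proj j).comp Dg))) z :=
    fun j => conjCLM.hasFDerivAt.comp z
      ((ContinuousLinearMap.fst ℝ ℂ ℂ).hasFDerivAt.comp z (hq j))
  have hg2 : ∀ j : Fin m, HasFDerivAt (fun w => (starRingEnd ℂ) ((g w j).2))
      (conjCLM.comp ((ContinuousLinearMap.snd ℝ ℂ ℂ).comp
        ((ContinuousLinearMap.proj j).comp Dg))) z :=
    fun j => conjCLM.hasFDerivAt.comp z
      ((ContinuousLinearMap.snd ℝ ℂ ℂ).hasFDerivAt.comp z (hq j))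
  have h := HasFDerivAt.fun_sum (u := Finset.univ)
    (fun j _ => (((hf1 j).mul (hg1 j)).add ((hf2 j).mul (hg2 j))))
  refine ⟨_, h, fun v => ?_⟩
  simp only [ContinuousLinearMap.sum_apply, ContinuousLinearMap.add_apply,
    ContinuousLinearMap.smul_apply, ContinuousLinearMap.coe_comp', Function.comp_apply,
    ContinuousLinearMap.coe_fst', ContinuousLinearMap.coe_snd', ContinuousLinearMap.proj_apply,
    conjCLM_apply, smul_eq_mul, herm, ← Finset.sum_add_distrib]
  exact Finset.sum_congr rfl fun j _ => by ring

end Aux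

/-- Theorem 2.4, local form: if a nonvanishing smooth `F : U → ℂ^{2m}` satisfies the
eigenspinor equation `∂_z̄ F = (λ/2)|F|² I(F)`, then `⟨∂_z̄ F, F⟩ = 0` and the harmonic
map equation `∂_z∂_z̄ F - (⟨∂_z∂_z̄ F, F⟩/|F|²) F = (⟨∂_z F, F⟩/|F|²) ∂_z̄ F` holds,
i.e. the projectivization `[F] : U → ℂP^{2m-1}` is harmonic. -/
theorem eigenspinor_map_is_harmonic
    (U : Set ℂ) (hU : IsOpen U) (m : ℕ) (hm : 1 ≤ m) (lam : ℝ)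
    (F : ℂ → (Fin m → ℂ × ℂ)) (hF : ContDiffOn ℝ (⊤ : ℕ∞) F U)
    (hF0 : ∀ z ∈ U, F z ≠ 0)
    (heig : ∀ z ∈ U,
      wirtZbar F z = (((lam : ℂ) / 2) * herm (F z) (F z)) • quatI (F z)) :
    ∀ z ∈ U,
      herm (wirtZbar F z) (F z) = 0 ∧
      wirtZ (fun w => wirtZbar F w) z -
          (herm (wirtZ (fun w => wirtZbar F w) z) (F z) / herm (F z) (F z)) • F z
        = (herm (wirtZ F z) (F z) / herm (F z) (F z)) • wirtZbar F z := by
  intro z hz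
  have hzU : U ∈ nhds z := hU.mem_nhds hz
  have hFd : DifferentiableAt ℝ F z := (hF.contDiffAt hzU).differentiableAt (by simp)
  have hdF : HasFDerivAt F (fderiv ℝ F z) z := hFd.hasFDerivAt
  set Df : ℂ →L[ℝ] (Fin m → ℂ × ℂ) := fderiv ℝ F z with hDfdef
  set q : ℂ := (lam : ℂ) / 2 with hqdef
  set ρ0 : ℂ := herm (F z) (F z) with hρ0def
  have hρ0 : ρ0 ≠ 0 := herm_self_ne_zero (hF0 z hz)
  set A : Fin m → ℂ × ℂ := quatI (F z) with hAdef
  have hWz : wirtZbar F z = (q * ρ0) • A := heig z hz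
  -- part (a)
  have ha : herm (wirtZbar F z) (F z) = 0 := by
    rw [hWz, herm_smul_left, herm_quatI_left, mul_zero]
  refine ⟨ha, ?_⟩
  -- herm (F z) (wirtZbar F z) = 0
  have h0 : herm (F z) (wirtZbar F z) = 0 := by
    rw [hWz, herm_smul_right, herm_quatI_right, mul_zero]
  have hb : herm (F z) (Df 1) = Complex.I * herm (F z) (Df Complex.I) := by
    have h0' := h0
    rw [wirtZbar, ← hDfdef, herm_smul_right, herm_add_right, herm_smul_right] at h0'
    simp only [map_div₀, map_one, map_ofNat, Complex.conj_I] at h0'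
    have h2 : (2:ℂ) ≠ 0 := two_ne_zero
    field_simp at h0'
    linear_combination h0'
  -- derivatives
  obtain ⟨Dρ, hDρ, hDρv⟩ := herm_hasFDerivAt hdF hdF
  have hK : HasFDerivAt (fun w => quatI (F w)) ((quatICLM m).comp Df) z :=
    ((quatICLM m).hasFDerivAt.comp z hdF : )
  have hc : HasFDerivAt (fun w => q * herm (F w) (F w)) (q • Dρ) z := hDρ.const_mul q
  have hH : HasFDerivAt (fun w => (q * herm (F w) (F w)) • quatI (F w))
      ((q * ρ0) • ((quatICLM m).comp Df) + (q • Dρ).smulRight A) z := hc.smul hK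
  have heqv : (fun w => wirtZbar F w) =ᶠ[nhds z]
      (fun w => (q * herm (F w) (F w)) • quatI (F w)) :=
    Filter.eventuallyEq_of_mem hzU (fun w hw => heig w hw)
  have hfd2 : fderiv ℝ (fun w => wirtZbar F w) z
      = (q * ρ0) • ((quatICLM m).comp Df) + (q • Dρ).smulRight A :=
    heqv.fderiv_eq.trans hH.fderiv
  have hW : wirtZ (fun w => wirtZbar F w) z
      = (q * herm (wirtZ F z) (F z)) • A + (q * ρ0) • quatI (wirtZbar F z) := by
    rw [wirtZ, hfd2, wirtZ, wirtZbar, ← hDfdef]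
    simp only [ContinuousLinearMap.add_apply, ContinuousLinearMap.smul_apply,
      ContinuousLinearMap.coe_comp', Function.comp_apply, ContinuousLinearMap.smulRight_apply,
      quatICLM_apply, hDρv, smul_eq_mul]
    rw [herm_smul_left, herm_sub_left, herm_smul_left, quatI_smul, quatI_add, quatI_smul]
    simp only [map_div₀, map_one, map_ofNat, Complex.conj_I]
    rw [hb]
    module
  have hWc : wirtZ (fun w => wirtZbar F w) z
      = (q * herm (wirtZ F z) (F z)) • A - ((q * ρ0) * (q * ρ0)) • F z := by
    rw [hW, hWz, quatI_smul, quatI_quatI]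
    have hconj : (starRingEnd ℂ) (q * ρ0) = q * ρ0 := by
      rw [map_mul, hρ0def, conj_herm_self, hqdef, map_div₀, Complex.conj_ofReal, map_ofNat]
    rw [hconj]
    module
  set a : ℂ := herm (wirtZ F z) (F z) with hadef
  have hinner : herm (wirtZ (fun w => wirtZbar F w) z) (F z)
      = -((q * ρ0) * (q * ρ0)) * ρ0 := by
    rw [hWc, herm_sub_left, herm_smul_left, herm_smul_left, hAdef, herm_quatI_left, ← hρ0def]
    ring
  rw [hinner, hWc, hWz]
  have e1 : -((q * ρ0) * (q * ρ0)) * ρ0 / ρ0 = -((q * ρ0) * (q * ρ0)) := by field_simp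
  have e2 : (a / ρ0) * (q * ρ0) = q * a := by field_simp
  rw [e1, smul_smul, e2]
  module
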